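/- Let ℓ : Z^2 → Z^2 be the automorphism (x,y) ↦ (−y,x), and let τ(n) be the number of pairs (s,t) of integers with s > 0, t ≥ 0 and s² + t² = n. Then the number of subgroups H of index n in Z^2 with ℓ(H) = H equals τ(n). -/

import Mathlib

/-- The rotation automorphism `ℓ : ℤ² → ℤ²`, `(x, y) ↦ (-y, x)`, as an additive hom. -/
def ell : (ℤ × ℤ) →+ ℤ × ℤ :=
  AddMonoidHom.mk' (fun p => (-p.2, p.1)) (by intro a b; simp [Prod.ext_iff]; ring)

/-- `τ(n)`: the number of pairs `(s, t)` of integers with `s > 0`, `t ≥ 0`, `s² + t² = n`. -/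
noncomputable def tauFn (n : ℕ) : ℕ :=
  Nat.card {st : ℤ × ℤ // 0 < st.1 ∧ 0 ≤ st.2 ∧ st.1 ^ 2 + st.2 ^ 2 = n}

/-!
Identify `ℤ²` with `ℤ[i]` via `(x, y) ↦ x + y i`. Then `ℓ` is multiplication by `i`, and
since `ℤ[i] = ℤ + ℤ i`, the `ℓ`-invariant subgroups are exactly the ideals of `ℤ[i]`; the
index of such a subgroup is the absolute norm of the ideal. As `ℤ[i]` is a principal ideal
domain with units `±1, ±i`, every nonzero ideal has exactly one generator `s + t i` with
`s > 0`, `t ≥ 0`, and the norm of that ideal is `s² + t²`.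
-/

namespace Zsqrtd

variable {d : ℤ}

def addEquivProd : ℤ√d ≃+ ℤ × ℤ where
  toFun z := (z.re, z.im)
  invFun p := ⟨p.1, p.2⟩
  left_inv _ := rfl
  right_inv _ := rfl
  map_add' _ _ := rfl

noncomputable def basis : Module.Basis (Fin 2) ℤ (ℤ√d) :=
  .ofEquivFun (addEquivProd.toIntLinearEquiv.trans (LinearEquiv.finTwoArrow ℤ ℤ).symm)

instance : Module.Free ℤ (ℤ√d) := .of_basis basis

instance : Module.Finite ℤ (ℤ√d) := .of_basis basis

theorem algebraNorm_eq_norm (z : ℤ√d) : Algebra.norm ℤ z = z.norm := by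
  rw [Algebra.norm_eq_matrix_det basis, Matrix.det_fin_two, norm_def]
  simp [Algebra.leftMulMatrix_apply, LinearMap.toMatrix_apply, basis, addEquivProd]

def idealOfSqrtdMulMem (K : AddSubgroup (ℤ√d)) (hK : ∀ z ∈ K, sqrtd * z ∈ K) :
    Ideal (ℤ√d) where
  toAddSubmonoid := K.toAddSubmonoid
  smul_mem' c z hz := by
    have hc : c * z = c.re • z + c.im • (sqrtd * z) := by
      conv_lhs => rw [show c = ⟨c.re, c.im⟩ from rfl, decompose]
      simp only [zsmul_eq_mul]; ring
    rw [smul_eq_mul, hc]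
    exact K.add_mem (K.zsmul_mem hz _) (K.zsmul_mem (hK z hz) _)

end Zsqrtd

namespace GaussianInt
open Zsqrtd

theorem absNorm_span_singleton (z : GaussianInt) :
    Ideal.absNorm (Ideal.span {z}) = z.norm.natAbs := by
  rw [Ideal.absNorm_span_singleton, algebraNorm_eq_norm]

theorem isUnit_sqrtd : IsUnit (sqrtd : GaussianInt) :=
  (norm_eq_one_iff' (by norm_num) _).mp (by simp [norm_def])

theorem eq_one_or_neg_one_or_sqrtd_or_neg_sqrtd_of_isUnit {u : GaussianInt} (hu : IsUnit u) :
    u = 1 ∨ u = -1 ∨ u = sqrtd ∨ u = -sqrtd := by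
  have hnorm : u.re * u.re + u.im * u.im = 1 := by
    simpa [norm_def] using (norm_eq_one_iff' (by norm_num) u).mpr hu
  have hre : -1 ≤ u.re ∧ u.re ≤ 1 := by constructor <;> nlinarith
  have him : -1 ≤ u.im ∧ u.im ≤ 1 := by constructor <;> nlinarith
  obtain ⟨hre₁, hre₂⟩ := hre
  obtain ⟨him₁, him₂⟩ := him
  simp only [Zsqrtd.ext_iff, re_one, im_one, re_neg, im_neg, re_sqrtd, im_sqrtd]
  interval_cases u.re <;> interval_cases u.im <;> omega

theorem exists_associated_re_pos_im_nonneg {z : GaussianInt} (hz : z ≠ 0) :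
    ∃ w, Associated z w ∧ 0 < w.re ∧ 0 ≤ w.im := by
  have hz' : z.re ≠ 0 ∨ z.im ≠ 0 := by
    by_contra! h
    exact hz (Zsqrtd.ext h.1 h.2)
  by_cases h₁ : 0 < z.re ∧ 0 ≤ z.im
  · exact ⟨z, .rfl, h₁⟩
  by_cases h₂ : z.re < 0 ∧ z.im ≤ 0
  · exact ⟨-z, Associated.rfl.neg_right, by simp only [re_neg, im_neg]; omega⟩
  by_cases h₃ : z.re ≥ 0 ∧ z.im < 0
  · exact ⟨sqrtd * z, associated_unit_mul_right z _ isUnit_sqrtd,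
      by simp only [re_mul, im_mul, re_sqrtd, im_sqrtd]; omega⟩
  · exact ⟨-(sqrtd * z), (associated_unit_mul_right z _ isUnit_sqrtd).neg_right,
      by simp only [re_neg, im_neg, re_mul, im_mul, re_sqrtd, im_sqrtd]; omega⟩

theorem eq_of_associated_of_re_pos_im_nonneg {z w : GaussianInt} (h : Associated z w)
    (hz : 0 < z.re ∧ 0 ≤ z.im) (hw : 0 < w.re ∧ 0 ≤ w.im) : z = w := by
  obtain ⟨u, rfl⟩ := h
  rcases eq_one_or_neg_one_or_sqrtd_or_neg_sqrtd_of_isUnit u.isUnit with hu | hu | hu | hu <;>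
    rw [hu] at hw ⊢
  · rw [mul_one]
  all_goals
    simp only [mul_neg, mul_one, re_neg, im_neg, re_mul, im_mul, re_sqrtd, im_sqrtd] at hw
    omega

theorem card_ideal_absNorm_eq {n : ℕ} (hn : n ≠ 0) :
    Nat.card {I : Ideal GaussianInt // Ideal.absNorm I = n} =
      Nat.card {z : GaussianInt // 0 < z.re ∧ 0 ≤ z.im ∧ z.norm = n} := by
  let f (z : {z : GaussianInt // 0 < z.re ∧ 0 ≤ z.im ∧ z.norm = n}) :
      {I : Ideal GaussianInt // Ideal.absNorm I = n} :=
    ⟨Ideal.span {z.1}, by rw [absNorm_span_singleton, z.2.2.2, Int.natAbs_natCast]⟩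
  have hf : Function.Bijective f := by
    refine ⟨fun z w h => Subtype.ext ?_, fun ⟨I, hI⟩ => ?_⟩
    · exact eq_of_associated_of_re_pos_im_nonneg
        (Ideal.span_singleton_eq_span_singleton.mp (congrArg Subtype.val h))
        ⟨z.2.1, z.2.2.1⟩ ⟨w.2.1, w.2.2.1⟩
    obtain ⟨z, rfl⟩ : ∃ z, I = Ideal.span {z} := (IsPrincipalIdealRing.principal I).principal
    have hz : z ≠ 0 := by
      rintro rfl
      exact hn (by simpa using hI.symm)
    obtain ⟨w, hzw, hw⟩ := exists_associated_re_pos_im_nonneg hz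
    have hspan : Ideal.span {w} = Ideal.span {z} :=
      (Ideal.span_singleton_eq_span_singleton.mpr hzw).symm
    have hnorm : w.norm = n := by
      rw [← hspan, absNorm_span_singleton] at hI
      rw [← hI, abs_natCast_norm]
    exact ⟨⟨w, hw.1, hw.2, hnorm⟩, Subtype.ext hspan⟩
  exact (Nat.card_congr (Equiv.ofBijective f hf)).symm

end GaussianInt

open Zsqrtd

theorem ell_ell (p : ℤ × ℤ) : ell (ell p) = -p := by
  simp [ell, Prod.ext_iff]

theorem map_ell_eq_self_iff {H : AddSubgroup (ℤ × ℤ)} :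
    H.map ell = H ↔ ∀ p ∈ H, ell p ∈ H := by
  refine ⟨fun h p hp => h ▸ AddSubgroup.mem_map_of_mem ell hp, fun h => ?_⟩
  refine le_antisymm (AddSubgroup.map_le_iff_le_comap.mpr h) fun p hp => ?_
  exact ⟨-ell p, H.neg_mem (h p hp), by rw [map_neg, ell_ell, neg_neg]⟩

theorem addEquivProd_symm_ell (p : ℤ × ℤ) :
    (addEquivProd.symm (ell p) : GaussianInt) = sqrtd * addEquivProd.symm p := by
  ext <;> simp [addEquivProd, ell]

theorem addEquivProd_sqrtd_mul (z : GaussianInt) :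
    addEquivProd (sqrtd * z) = ell (addEquivProd z) := by
  simp [addEquivProd, ell]

def idealEquivEllInvariant :
    Ideal GaussianInt ≃ {H : AddSubgroup (ℤ × ℤ) // H.map ell = H} where
  toFun I := ⟨I.toAddSubgroup.comap addEquivProd.symm.toAddMonoidHom, map_ell_eq_self_iff.mpr
    fun p hp => by simpa [addEquivProd_symm_ell] using I.mul_mem_left sqrtd hp⟩
  invFun H := idealOfSqrtdMulMem (H.1.comap addEquivProd.toAddMonoidHom) fun z hz => by
    simpa [addEquivProd_sqrtd_mul] using map_ell_eq_self_iff.mp H.2 _ hz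
  left_inv I := by ext; simp [idealOfSqrtdMulMem]
  right_inv H := by ext; simp [idealOfSqrtdMulMem]

theorem index_idealEquivEllInvariant (I : Ideal GaussianInt) :
    (idealEquivEllInvariant I).1.index = Ideal.absNorm I :=
  AddSubgroup.index_comap_of_surjective _ addEquivProd.symm.surjective

/-- The number of `ℓ`-invariant subgroups of index `n` in `ℤ²` equals `τ(n)`. -/
theorem card_ell_invariant_subgroups (n : ℕ) (hn : 0 < n) :
    Nat.card {H : AddSubgroup (ℤ × ℤ) // H.index = n ∧ H.map ell = H} = tauFn n := by
  calc Nat.card {H : AddSubgroup (ℤ × ℤ) // H.index = n ∧ H.map ell = H}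
      = Nat.card {H : {H : AddSubgroup (ℤ × ℤ) // H.map ell = H} // H.1.index = n} :=
        Nat.card_congr ((Equiv.subtypeSubtypeEquivSubtypeInter _ _).trans
          (Equiv.subtypeEquivRight fun _ => and_comm)).symm
    _ = Nat.card {I : Ideal GaussianInt // Ideal.absNorm I = n} :=
        Nat.card_congr (idealEquivEllInvariant.subtypeEquiv fun I => by
          rw [index_idealEquivEllInvariant]).symm
    _ = Nat.card {z : GaussianInt // 0 < z.re ∧ 0 ≤ z.im ∧ z.norm = n} :=
        GaussianInt.card_ideal_absNorm_eq hn.ne'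
    _ = tauFn n :=
        Nat.card_congr (addEquivProd.toEquiv.subtypeEquiv fun z => by
          simp [addEquivProd, norm_def, sq])
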